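/- arXiv:1411.4034 — 5 statements merged into one kernel-verified Lean document; each statement's English description precedes it below -/
import Mathlib

section
/- Let u be a continuous real-valued function on a closed ball B̄(x, ρ) ⊂ ℝ^d. Then there exists h ∈ ℝ^d with |h| ≤ ρ such that the Lebesgue-average of u over B(x,ρ) equals (u(x+h) + u(x−h))/2. -/
/-!
Translation invariance of Lebesgue measure gives `∫_{B(x,ρ)} u = ∫_{B(0,ρ)} u(x + h) dh`, and its
invariance under `h ↦ -h` gives the same for `u(x - h)`. Hence the average of `u` over `B(x,ρ)` is
the average over `B(0,ρ)` of the symmetrization `h ↦ (u(x + h) + u(x - h)) / 2`, which is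
continuous on the connected set `B(0,ρ)` and therefore attains its average there.
-/

open Metric MeasureTheory

section

variable {E F : Type*} [NormedAddCommGroup E]

theorem preimage_add_left_ball_self (x : E) (r : ℝ) : (x + ·) ⁻¹' ball x r = ball 0 r := by
  ext h; simp

theorem preimage_sub_left_ball_self (x : E) (r : ℝ) : (x - ·) ⁻¹' ball x r = ball 0 r := by
  ext h; simp

variable [MeasurableSpace E] [BorelSpace E] [NormedAddCommGroup F]
  (μ : Measure E) [μ.IsAddLeftInvariant]

theorem integrableOn_ball_zero_comp_add_left {u : E → F} {x : E} {r : ℝ}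
    (hu : IntegrableOn u (ball x r) μ) : IntegrableOn (fun h ↦ u (x + h)) (ball 0 r) μ := by
  have h := ((measurePreserving_add_left μ x).integrableOn_comp_preimage
    (measurableEmbedding_addLeft x)).2 hu
  rwa [preimage_add_left_ball_self] at h

theorem integrableOn_ball_zero_comp_sub_left [μ.IsNegInvariant] {u : E → F} {x : E} {r : ℝ}
    (hu : IntegrableOn u (ball x r) μ) : IntegrableOn (fun h ↦ u (x - h)) (ball 0 r) μ := by
  have h := ((Measure.measurePreserving_sub_left μ x).integrableOn_comp_preimage
    (measurableEmbedding_subLeft x)).2 hu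
  rwa [preimage_sub_left_ball_self] at h

variable [NormedSpace ℝ F]

theorem setIntegral_ball_zero_comp_add_left (u : E → F) (x : E) (r : ℝ) :
    ∫ h in ball 0 r, u (x + h) ∂μ = ∫ y in ball x r, u y ∂μ := by
  rw [← preimage_add_left_ball_self]
  exact (measurePreserving_add_left μ x).setIntegral_preimage_emb
    (measurableEmbedding_addLeft x) u _

theorem setIntegral_ball_zero_comp_sub_left [μ.IsNegInvariant] (u : E → F) (x : E) (r : ℝ) :
    ∫ h in ball 0 r, u (x - h) ∂μ = ∫ y in ball x r, u y ∂μ := by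
  rw [← preimage_sub_left_ball_self]
  exact (Measure.measurePreserving_sub_left μ x).setIntegral_preimage_emb
    (measurableEmbedding_subLeft x) u _

theorem setIntegral_ball_eq_inv_two_smul_setIntegral_add_sub [μ.IsNegInvariant]
    {u : E → F} {x : E} {r : ℝ} (hu : IntegrableOn u (ball x r) μ) :
    ∫ y in ball x r, u y ∂μ = (2 : ℝ)⁻¹ • ∫ h in ball 0 r, (u (x + h) + u (x - h)) ∂μ := by
  rw [integral_add (integrableOn_ball_zero_comp_add_left μ hu)
    (integrableOn_ball_zero_comp_sub_left μ hu), setIntegral_ball_zero_comp_add_left,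
    setIntegral_ball_zero_comp_sub_left, ← two_smul ℝ, inv_smul_smul₀ two_ne_zero]

theorem setAverage_ball_eq_setAverage_ball_zero_add_sub [μ.IsNegInvariant]
    {u : E → F} {x : E} {r : ℝ} (hu : IntegrableOn u (ball x r) μ) :
    ⨍ y in ball x r, u y ∂μ = ⨍ h in ball 0 r, (2 : ℝ)⁻¹ • (u (x + h) + u (x - h)) ∂μ := by
  have hvol : μ.real (ball 0 r) = μ.real (ball x r) := by
    rw [← preimage_add_left_ball_self x r, measureReal_def, measure_preimage_add, measureReal_def]
  rw [setAverage_eq, setAverage_eq, integral_smul,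
    ← setIntegral_ball_eq_inv_two_smul_setIntegral_add_sub μ hu, hvol]

end

theorem stmt_8 (d : ℕ) (x : EuclideanSpace ℝ (Fin d)) (ρ : ℝ) (hρ : 0 < ρ)
    (u : EuclideanSpace ℝ (Fin d) → ℝ) (hu : ContinuousOn u (closedBall x ρ)) :
    ∃ h : EuclideanSpace ℝ (Fin d), ‖h‖ ≤ ρ ∧
      (⨍ y in ball x ρ, u y) = (u (x + h) + u (x - h)) / 2 := by
  set g := fun h ↦ (u (x + h) + u (x - h)) / 2
  have hg : ContinuousOn g (closedBall 0 ρ) :=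
    ((hu.comp (by fun_prop) fun h hh ↦ by simpa using hh).add
      (hu.comp (by fun_prop) fun h hh ↦ by simpa using hh)).div_const 2
  obtain ⟨h, hh, hgh⟩ := exists_eq_setAverage (μ := volume) (isConnected_ball hρ)
    (hg.mono ball_subset_closedBall)
    ((hg.integrableOn_compact (isCompact_closedBall 0 ρ)).mono_set ball_subset_closedBall)
    measure_ball_lt_top.ne (measure_ball_pos volume 0 hρ).ne'
  refine ⟨h, (mem_ball_zero_iff.1 hh).le, ?_⟩
  rw [setAverage_ball_eq_setAverage_ball_zero_add_sub volume
    ((hu.integrableOn_compact (isCompact_closedBall x ρ)).mono_set ball_subset_closedBall)]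
  simp_rw [smul_eq_mul, inv_mul_eq_div]
  exact hgh.symm
end

section
/- Let Ω ⊂ ℝ^d be a bounded convex domain, u ∈ C(Ω̄), and let Γ_u denote the convex hull of the graph G_u = {(x, u(x)) : x ∈ Ω̄} ⊂ ℝ^{d+1}. Let r be an admissible radius function on Ω and define Su(x) = (sup_{B(x,r(x))} u + inf_{B(x,r(x))} u)/2 and Mu(x) = Lebesgue-average of u over B(x,r(x)) for x ∈ Ω, with Su = Mu = u on ∂Ω. Then for every x ∈ Ω̄, both (x, Su(x)) and (x, Mu(x)) belong to Γ_u. -/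
/-!
Over a ball centred at `x`, the graph points `(w, u w)` and `(2x - w, u (2x - w))` have midpoint
`(x, v w)` with `v w = (u w + u (2x - w)) / 2`, and the slice of `Γ_u` above `x` is an interval, so
it contains every value between two values of `v`. The midrange of `u` on the ball lies between the
values of `v` at a minimiser and at a maximiser of `u`. The average of `u` equals the average of `v`,
since the reflection through `x` preserves the ball and Lebesgue measure, so it lies between the
minimum and the maximum of `v`.
-/

open Metric MeasureTheory Set

theorem dist_two_smul_sub_left {E : Type*} [SeminormedAddCommGroup E] (x w : E) :
    dist (2 • x - w) x = dist w x := by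
  rw [dist_eq_norm, dist_eq_norm, two_smul, add_sub_right_comm, add_sub_cancel_right, norm_sub_rev]

theorem two_smul_sub_mem_closedBall {E : Type*} [SeminormedAddCommGroup E] {x w : E} {r : ℝ}
    (hw : w ∈ closedBall x r) : 2 • x - w ∈ closedBall x r := by
  rwa [mem_closedBall, dist_two_smul_sub_left]

theorem setIntegral_ball_comp_two_smul_sub {E F : Type*} [NormedAddCommGroup E]
    [MeasurableSpace E] [BorelSpace E] [NormedAddCommGroup F] [NormedSpace ℝ F]
    (μ : Measure E) [μ.IsAddLeftInvariant] [μ.IsNegInvariant] (f : E → F) (x : E) (r : ℝ) :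
    ∫ y in ball x r, f (2 • x - y) ∂μ = ∫ y in ball x r, f y ∂μ := by
  have hpre : (fun y => 2 • x - y) ⁻¹' ball x r = ball x r := by
    ext y
    rw [mem_preimage, mem_ball, mem_ball, dist_two_smul_sub_left]
  conv_lhs => rw [← hpre]
  exact (μ.measurePreserving_sub_left (2 • x)).setIntegral_preimage_emb
    (Homeomorph.subLeft (2 • x)).measurableEmbedding f _

section NormedSpace

variable {E : Type*} [NormedAddCommGroup E] [NormedSpace ℝ E]

theorem isLUB_image_ball {u : E → ℝ} {x y : E} {r : ℝ} (hr : 0 < r)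
    (hu : ContinuousOn u (closedBall x r)) (hy : y ∈ closedBall x r)
    (hmax : IsMaxOn u (closedBall x r) y) : IsLUB (u '' ball x r) (u y) := by
  refine isLUB_of_mem_closure ?_ ?_
  · rintro _ ⟨w, hw, rfl⟩
    exact hmax (ball_subset_closedBall hw)
  · rw [← closure_ball x hr.ne'] at hu hy
    exact hu.image_closure (mem_image_of_mem u hy)

theorem isGLB_image_ball {u : E → ℝ} {x z : E} {r : ℝ} (hr : 0 < r)
    (hu : ContinuousOn u (closedBall x r)) (hz : z ∈ closedBall x r)
    (hmin : IsMinOn u (closedBall x r) z) : IsGLB (u '' ball x r) (u z) := by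
  refine isGLB_of_mem_closure ?_ ?_
  · rintro _ ⟨w, hw, rfl⟩
    exact hmin (ball_subset_closedBall hw)
  · rw [← closure_ball x hr.ne'] at hu hz
    exact hu.image_closure (mem_image_of_mem u hz)

theorem closedBall_subset_closure_of_le_infDist_frontier [FiniteDimensional ℝ E] {s : Set E}
    {x : E} {r : ℝ} (hx : x ∈ s) (hr : r ≤ infDist x (frontier s)) :
    closedBall x r ⊆ closure s := by
  rcases eq_or_ne s univ with rfl | hs
  · simp
  obtain ⟨y, hy, hyd⟩ := exists_mem_frontier_infDist_compl_eq_dist hx hs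
  calc closedBall x r ⊆ closedBall x (infDist x sᶜ) :=
        closedBall_subset_closedBall (hr.trans (hyd ▸ infDist_le_dist_of_mem hy))
    _ ⊆ closure s := closedBall_infDist_compl_subset_closure hx

namespace Convex

variable {C : Set (E × ℝ)}

theorem ordConnected_preimage_mk (hC : Convex ℝ C) (x : E) :
    ((fun t : ℝ => (x, t)) ⁻¹' C).OrdConnected := by
  refine convex_iff_ordConnected.1 fun a ha b hb θ η hθ hη hθη => ?_
  simpa [Prod.smul_mk, Prod.mk_add_mk, Convex.combo_self hθη] using hC ha hb hθ hη hθη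

theorem mk_midpoint_mem (hC : Convex ℝ C) {x w : E} {a b : ℝ}
    (ha : (w, a) ∈ C) (hb : (2 • x - w, b) ∈ C) : (x, (a + b) / 2) ∈ C := by
  convert hC ha hb (by norm_num : (0 : ℝ) ≤ 1 / 2) (by norm_num : (0 : ℝ) ≤ 1 / 2) (by norm_num)
    using 1
  ext
  · simp only [Prod.fst_add, Prod.smul_fst]
    module
  · simp only [Prod.snd_add, Prod.smul_snd, smul_eq_mul]
    ring

theorem mk_mem_of_le_of_le (hC : Convex ℝ C) {K : Set E} {x : E} {u : E → ℝ}
    (hK : ∀ w ∈ K, 2 • x - w ∈ K) (hgraph : ∀ w ∈ K, (w, u w) ∈ C)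
    {w₁ w₂ : E} {t : ℝ} (hw₁ : w₁ ∈ K) (hw₂ : w₂ ∈ K)
    (h₁ : (u w₁ + u (2 • x - w₁)) / 2 ≤ t) (h₂ : t ≤ (u w₂ + u (2 • x - w₂)) / 2) :
    (x, t) ∈ C :=
  have hmid : ∀ w ∈ K, (x, (u w + u (2 • x - w)) / 2) ∈ C := fun w hw =>
    hC.mk_midpoint_mem (hgraph w hw) (hgraph _ (hK w hw))
  (hC.ordConnected_preimage_mk x).out (hmid w₁ hw₁) (hmid w₂ hw₂) ⟨h₁, h₂⟩

variable [ProperSpace E]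

theorem mk_midrange_mem (hC : Convex ℝ C) {u : E → ℝ} {x : E} {r : ℝ} (hr : 0 < r)
    (hu : ContinuousOn u (closedBall x r)) (hgraph : ∀ w ∈ closedBall x r, (w, u w) ∈ C) :
    (x, (sSup (u '' ball x r) + sInf (u '' ball x r)) / 2) ∈ C := by
  have hne : (u '' ball x r).Nonempty := (nonempty_ball.2 hr).image u
  obtain ⟨y, hy, hmax⟩ :=
    (isCompact_closedBall x r).exists_isMaxOn (nonempty_closedBall.2 hr.le) hu
  obtain ⟨z, hz, hmin⟩ :=
    (isCompact_closedBall x r).exists_isMinOn (nonempty_closedBall.2 hr.le) hu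
  rw [(isLUB_image_ball hr hu hy hmax).csSup_eq hne, (isGLB_image_ball hr hu hz hmin).csInf_eq hne]
  have hy' : u z ≤ u (2 • x - y) := hmin (two_smul_sub_mem_closedBall hy)
  have hz' : u (2 • x - z) ≤ u y := hmax (two_smul_sub_mem_closedBall hz)
  exact hC.mk_mem_of_le_of_le (fun _ => two_smul_sub_mem_closedBall) hgraph hz hy
    (by linarith) (by linarith)

theorem mk_setAverage_ball_mem [MeasurableSpace E] [BorelSpace E] (μ : Measure E)
    [μ.IsAddHaarMeasure] [μ.IsNegInvariant] (hC : Convex ℝ C) {u : E → ℝ} {x : E} {r : ℝ}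
    (hr : 0 < r) (hu : ContinuousOn u (closedBall x r))
    (hgraph : ∀ w ∈ closedBall x r, (w, u w) ∈ C) :
    (x, ⨍ y in ball x r, u y ∂μ) ∈ C := by
  have hu' : ContinuousOn (fun w => u (2 • x - w)) (closedBall x r) :=
    hu.comp (continuousOn_const.sub continuousOn_id) fun _ => two_smul_sub_mem_closedBall
  set v := fun w => (u w + u (2 • x - w)) / 2
  obtain ⟨w₁, hw₁, hmin⟩ := (isCompact_closedBall x r).exists_isMinOn
    (nonempty_closedBall.2 hr.le) ((hu.add hu').div_const 2)
  obtain ⟨w₂, hw₂, hmax⟩ := (isCompact_closedBall x r).exists_isMaxOn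
    (nonempty_closedBall.2 hr.le) ((hu.add hu').div_const 2)
  have hint : IntegrableOn u (ball x r) μ :=
    (hu.integrableOn_compact (isCompact_closedBall x r)).mono_set ball_subset_closedBall
  have hint' : IntegrableOn (fun w => u (2 • x - w)) (ball x r) μ :=
    (hu'.integrableOn_compact (isCompact_closedBall x r)).mono_set ball_subset_closedBall
  have havg : ⨍ y in ball x r, v y ∂μ = ⨍ y in ball x r, u y ∂μ := by
    simp only [v, setAverage_eq, integral_div, integral_add hint hint',
      setIntegral_ball_comp_two_smul_sub, smul_eq_mul]
    ring
  have hIcc : ⨍ y in ball x r, v y ∂μ ∈ Icc (v w₁) (v w₂) :=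
    (convex_Icc _ _).set_average_mem isClosed_Icc (measure_ball_pos μ x hr).ne'
      measure_ball_lt_top.ne
      (ae_restrict_of_forall_mem measurableSet_ball fun w hw =>
        ⟨hmin (ball_subset_closedBall hw), hmax (ball_subset_closedBall hw)⟩)
      ((hint.add hint').div_const 2)
  rw [← havg]
  exact hC.mk_mem_of_le_of_le (fun _ => two_smul_sub_mem_closedBall) hgraph hw₁ hw₂ hIcc.1 hIcc.2

end Convex

end NormedSpace

theorem stmt_9_general (d : ℕ) (Ω : Set (EuclideanSpace ℝ (Fin d)))
    (hopen : IsOpen Ω)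
    (u : EuclideanSpace ℝ (Fin d) → ℝ) (hu : ContinuousOn u (closure Ω))
    (r : EuclideanSpace ℝ (Fin d) → ℝ)
    (hr : ∀ x ∈ Ω, 0 < r x ∧ r x ≤ infDist x (frontier Ω))
    (S M : EuclideanSpace ℝ (Fin d) → ℝ)
    (hS : ∀ x ∈ Ω, S x = (sSup (u '' ball x (r x)) + sInf (u '' ball x (r x))) / 2)
    (hM : ∀ x ∈ Ω, M x = ⨍ y in ball x (r x), u y)
    (hSb : ∀ x ∈ frontier Ω, S x = u x) (hMb : ∀ x ∈ frontier Ω, M x = u x) :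
    ∀ x ∈ closure Ω,
      (x, S x) ∈ convexHull ℝ {p : EuclideanSpace ℝ (Fin d) × ℝ | ∃ z ∈ closure Ω, p = (z, u z)} ∧
      (x, M x) ∈ convexHull ℝ {p : EuclideanSpace ℝ (Fin d) × ℝ | ∃ z ∈ closure Ω, p = (z, u z)} := by
  intro x hx
  set G := {p : EuclideanSpace ℝ (Fin d) × ℝ | ∃ z ∈ closure Ω, p = (z, u z)}
  by_cases hxΩ : x ∈ Ω
  · obtain ⟨hr₀, hr_le⟩ := hr x hxΩ
    have hball := closedBall_subset_closure_of_le_infDist_frontier hxΩ hr_le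
    have hgraph : ∀ w ∈ closedBall x (r x), (w, u w) ∈ convexHull ℝ G :=
      fun w hw => subset_convexHull ℝ G ⟨w, hball hw, rfl⟩
    rw [hS x hxΩ, hM x hxΩ]
    exact ⟨(convex_convexHull ℝ G).mk_midrange_mem hr₀ (hu.mono hball) hgraph,
      (convex_convexHull ℝ G).mk_setAverage_ball_mem volume hr₀ (hu.mono hball) hgraph⟩
  · have hxf : x ∈ frontier Ω := ⟨hx, by rwa [hopen.interior_eq]⟩
    rw [hSb x hxf, hMb x hxf]
    exact ⟨subset_convexHull ℝ G ⟨x, hx, rfl⟩, subset_convexHull ℝ G ⟨x, hx, rfl⟩⟩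

theorem stmt_9 (d : ℕ) (Ω : Set (EuclideanSpace ℝ (Fin d))) (hne : Ω.Nonempty)
    (hopen : IsOpen Ω) (hconv : Convex ℝ Ω) (hbd : Bornology.IsBounded Ω)
    (u : EuclideanSpace ℝ (Fin d) → ℝ) (hu : ContinuousOn u (closure Ω))
    (r : EuclideanSpace ℝ (Fin d) → ℝ)
    (hr : ∀ x ∈ Ω, 0 < r x ∧ r x ≤ infDist x (frontier Ω))
    (S M : EuclideanSpace ℝ (Fin d) → ℝ)
    (hS : ∀ x ∈ Ω, S x = (sSup (u '' ball x (r x)) + sInf (u '' ball x (r x))) / 2)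
    (hM : ∀ x ∈ Ω, M x = ⨍ y in ball x (r x), u y)
    (hSb : ∀ x ∈ frontier Ω, S x = u x) (hMb : ∀ x ∈ frontier Ω, M x = u x) :
    ∀ x ∈ closure Ω,
      (x, S x) ∈ convexHull ℝ {p : EuclideanSpace ℝ (Fin d) × ℝ | ∃ z ∈ closure Ω, p = (z, u z)} ∧
      (x, M x) ∈ convexHull ℝ {p : EuclideanSpace ℝ (Fin d) × ℝ | ∃ z ∈ closure Ω, p = (z, u z)} :=
  stmt_9_general d Ω hopen u hu r hr S M hS hM hSb hMb
end

section
/- Comparison principle: Let μ be a positive Borel measure on ℝ^d with μ(B) > 0 for every ball B, Ω ⊂ ℝ^d a bounded domain, r an admissible radius function on Ω, and 0 ≤ α < 1. Define for u ∈ C(Ω̄): T_α u(x) = α·(sup_{B(x,r(x))} u + inf_{B(x,r(x))} u)/2 + (1−α)·(μ-average of u over B(x,r(x))) for x ∈ Ω. If u, v ∈ C(Ω̄) satisfy T_α u = u and T_α v = v in Ω, and u ≤ v on ∂Ω, then u ≤ v throughout Ω. -/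
/-!
Let `w = u - v` and let `m` be its maximum over the compact set `closure Ω`. At a point `a ∈ Ω`
with `w a = m`, subtracting the fixed-point identities for `u` and `v` bounds the midrange parts
by `α m`, so `(1 - α) m ≤ (1 - α) ⨍ w` over the ball `B(a, r a)`. Since `w ≤ m`, the continuous
function `m - w` is nonnegative with nonpositive integral on this ball, hence vanishes there,
because `μ` charges every ball. So `{w = m}` is open and relatively closed in the connected set
`Ω`: if `m` were attained in `Ω`, then `w = m` on all of `closure Ω`, in particular on the
frontier, which is nonempty. Either way `m` is attained on the frontier, where `w ≤ 0`.
-/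

open Metric MeasureTheory Set Filter Topology

section Topology

variable {X : Type*} [TopologicalSpace X]

theorem IsPreconnected.eqOn_const_of_eventually_eq {Y : Type*} [TopologicalSpace Y] [T2Space Y]
    {Ω : Set X} (hΩ : IsPreconnected Ω) (hopen : IsOpen Ω) {w : X → Y} (hw : ContinuousOn w Ω)
    {m : Y} (hloc : ∀ a ∈ Ω, w a = m → ∀ᶠ x in 𝓝 a, w x = m) {z : X} (hz : z ∈ Ω)
    (hzm : w z = m) : EqOn w (fun _ => m) Ω := by
  set U := {x ∈ Ω | w x = m}
  have hU : IsOpen U := isOpen_iff_mem_nhds.2 fun a ha =>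
    inter_mem (hopen.mem_nhds ha.1) (hloc a ha.1 ha.2)
  have hclosed : closure U ∩ Ω ⊆ U := fun x hx =>
    ⟨hx.2, EqOn.of_subset_closure (fun y hy => hy.2) (hw.mono inter_subset_right)
      continuousOn_const (fun y hy => ⟨subset_closure hy, hy.1⟩) inter_subset_left hx⟩
  exact fun x hx => (hΩ.subset_of_closure_inter_subset hU ⟨z, hz, hz, hzm⟩ hclosed hx).2

theorem IsOpen.exists_mem_frontier_le_of_eventually_eq [PreconnectedSpace X] {Y : Type*}
    [TopologicalSpace Y] [LinearOrder Y] [OrderClosedTopology Y] {Ω : Set X} (hopen : IsOpen Ω)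
    (hconn : IsPreconnected Ω) (hcpt : IsCompact (closure Ω)) (hΩ : Ω ≠ univ) {w : X → Y}
    (hw : ContinuousOn w (closure Ω))
    (hplateau : ∀ a ∈ Ω, IsMaxOn w (closure Ω) a → ∀ᶠ y in 𝓝 a, w y = w a) :
    ∀ x ∈ Ω, ∃ p ∈ frontier Ω, w x ≤ w p := by
  intro x hx
  obtain ⟨z, hz, hmax⟩ := hcpt.exists_isMaxOn ⟨x, subset_closure hx⟩ hw
  by_cases hzf : z ∈ frontier Ω
  · exact ⟨z, hzf, hmax (subset_closure hx)⟩
  have hzΩ : z ∈ Ω := by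
    by_contra h
    exact hzf (hopen.frontier_eq ▸ ⟨hz, h⟩)
  have hΩz : EqOn w (fun _ => w z) Ω :=
    hconn.eqOn_const_of_eventually_eq hopen (hw.mono subset_closure)
      (fun a ha haz => haz ▸ hplateau a ha fun y hy => (hmax hy).trans_eq haz.symm) hzΩ rfl
  have hclosure : closure Ω ⊆ closure Ω ∩ w ⁻¹' {w z} :=
    closure_minimal (fun y hy => ⟨subset_closure hy, hΩz hy⟩)
      (hw.preimage_isClosed_of_isClosed isClosed_closure isClosed_singleton)
  obtain ⟨p, hp⟩ := nonempty_frontier_iff.2 ⟨⟨x, hx⟩, hΩ⟩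
  exact ⟨p, hp, (hmax (subset_closure hx)).trans (hclosure (frontier_subset_closure hp)).2.ge⟩

end Topology

section MetricMeasure

variable {X : Type*} [PseudoMetricSpace X] [MeasurableSpace X] {μ : Measure X}

theorem Measure.isOpenPosMeasure_of_measure_ball_pos
    (h : ∀ (x : X) (ρ : ℝ), 0 < ρ → 0 < μ (ball x ρ)) : μ.IsOpenPosMeasure := by
  refine ⟨fun U hU ⟨x, hx⟩ => ?_⟩
  obtain ⟨ε, hε, hball⟩ := Metric.isOpen_iff.1 hU x hx
  exact ((h x ε hε).trans_le (measure_mono hball)).ne'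

theorem isFiniteMeasureOnCompacts_of_measure_ball_lt_top (h : ∀ (x : X) (ρ : ℝ), μ (ball x ρ) < ⊤) :
    IsFiniteMeasureOnCompacts μ := by
  refine ⟨fun K hK => ?_⟩
  rcases K.eq_empty_or_nonempty with rfl | ⟨c, -⟩
  · simp
  obtain ⟨ρ, hKρ⟩ := hK.isBounded.subset_ball c
  exact (measure_mono hKρ).trans_lt (h c ρ)

end MetricMeasure

section Average

variable {X : Type*} [TopologicalSpace X] [MeasurableSpace X] [OpensMeasurableSpace X]
  {μ : Measure X}

theorem eqOn_of_le_of_le_setAverage [μ.IsOpenPosMeasure] {s : Set X} (hs : IsOpen s)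
    (hμs : μ s ≠ ⊤) {f : X → ℝ} {m : ℝ} (hf : ContinuousOn f s) (hfi : IntegrableOn f s μ)
    (hle : ∀ x ∈ s, f x ≤ m) (havg : m ≤ ⨍ x in s, f x ∂μ) : EqOn f (fun _ => m) s := by
  have hnonneg : 0 ≤ᵐ[μ.restrict s] fun x => m - f x :=
    (ae_restrict_iff' hs.measurableSet).2 (Eventually.of_forall fun x hx => sub_nonneg.2 (hle x hx))
  have hmfi : IntegrableOn (fun x => m - f x) s μ := (integrableOn_const hμs).sub hfi
  have hint : ∫ x in s, (m - f x) ∂μ = 0 := by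
    refine le_antisymm ?_ (integral_nonneg_of_ae hnonneg)
    rw [integral_sub (integrableOn_const (C := m) hμs) hfi, setIntegral_const,
      ← measure_smul_setAverage f hμs, smul_eq_mul, smul_eq_mul]
    exact sub_nonpos.2 (mul_le_mul_of_nonneg_left havg measureReal_nonneg)
  have hae := (integral_eq_zero_iff_of_nonneg_ae hnonneg hmfi).1 hint
  refine μ.eqOn_open_of_ae_eq (hae.mono fun x hx => ?_) hs hf continuousOn_const
  simpa [sub_eq_zero, eq_comm] using hx

end Average

section TugOfWar

variable {X : Type*} {f g : X → ℝ} {s : Set X} {m : ℝ}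

theorem sSup_image_le_sSup_image_add (hs : s.Nonempty) (hg : BddAbove (g '' s))
    (h : ∀ x ∈ s, f x ≤ g x + m) : sSup (f '' s) ≤ sSup (g '' s) + m :=
  csSup_le (hs.image f) <| forall_mem_image.2 fun x hx =>
    (h x hx).trans (add_le_add_left (le_csSup hg (mem_image_of_mem g hx)) m)

theorem sInf_image_le_sInf_image_add (hs : s.Nonempty) (hf : BddBelow (f '' s))
    (h : ∀ x ∈ s, f x ≤ g x + m) : sInf (f '' s) ≤ sInf (g '' s) + m :=
  sub_le_iff_le_add.1 <| le_csInf (hs.image g) <| forall_mem_image.2 fun x hx =>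
    sub_le_iff_le_add.2 ((csInf_le hf (mem_image_of_mem f hx)).trans (h x hx))

variable [MeasurableSpace X]

/-- The operator `T_α` of the paper: `T_α u x = tugOfWarAverage μ α (ball x (r x)) u`. -/
noncomputable def tugOfWarAverage (μ : Measure X) (α : ℝ) (s : Set X) (u : X → ℝ) : ℝ :=
  α * ((sSup (u '' s) + sInf (u '' s)) / 2) + (1 - α) * ⨍ y in s, u y ∂μ

theorem tugOfWarAverage_sub_le {μ : Measure X} {α : ℝ} (hα : 0 ≤ α) (hs : s.Nonempty)
    (hf : BddBelow (f '' s)) (hg : BddAbove (g '' s)) (hfi : IntegrableOn f s μ)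
    (hgi : IntegrableOn g s μ) (h : ∀ x ∈ s, f x ≤ g x + m) :
    tugOfWarAverage μ α s f - tugOfWarAverage μ α s g ≤
      α * m + (1 - α) * ⨍ x in s, (f - g) x ∂μ := by
  have hmid : α * ((sSup (f '' s) + sInf (f '' s)) / 2 - (sSup (g '' s) + sInf (g '' s)) / 2)
      ≤ α * m := by
    have := sSup_image_le_sSup_image_add hs hg h
    have := sInf_image_le_sInf_image_add hs hf h
    exact mul_le_mul_of_nonneg_left (by linarith) hα
  have havg : ⨍ x in s, (f - g) x ∂μ = ⨍ x in s, f x ∂μ - ⨍ x in s, g x ∂μ := by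
    simp only [setAverage_eq, Pi.sub_apply, integral_sub hfi hgi, smul_sub]
  rw [havg, tugOfWarAverage, tugOfWarAverage]
  linarith

theorem sub_eqOn_of_isMaxOn_of_eq_tugOfWarAverage [TopologicalSpace X] [T2Space X]
    [OpensMeasurableSpace X] {μ : Measure X} [μ.IsOpenPosMeasure] [IsFiniteMeasureOnCompacts μ]
    {α : ℝ} (hα0 : 0 ≤ α) (hα1 : α < 1) {K : Set X} (hK : IsCompact K) (hs : IsOpen s)
    (hsK : s ⊆ K) (hf : ContinuousOn f K) (hg : ContinuousOn g K) {a : X} (ha : a ∈ s)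
    (hTf : f a = tugOfWarAverage μ α s f) (hTg : g a = tugOfWarAverage μ α s g)
    (hmax : IsMaxOn (f - g) s a) : EqOn (f - g) (fun _ => (f - g) a) s := by
  have hfi : IntegrableOn f s μ := (hf.integrableOn_compact hK).mono_set hsK
  have hgi : IntegrableOn g s μ := (hg.integrableOn_compact hK).mono_set hsK
  have hle (x) (hx : x ∈ s) : f x ≤ g x + (f - g) a := by
    have : (f - g) x ≤ (f - g) a := hmax hx
    rw [Pi.sub_apply] at this
    linarith
  have hstep := tugOfWarAverage_sub_le hα0 ⟨a, ha⟩ ((hK.bddBelow_image hf).mono (image_mono hsK))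
    ((hK.bddAbove_image hg).mono (image_mono hsK)) hfi hgi hle
  rw [← hTf, ← hTg] at hstep
  refine eqOn_of_le_of_le_setAverage hs (measure_ne_top_of_subset hsK hK.measure_ne_top)
    ((hf.sub hg).mono hsK) (hfi.sub hgi) (fun x hx => hmax hx) ?_
  have : (1 - α) * (f - g) a ≤ (1 - α) * ⨍ x in s, (f - g) x ∂μ := by
    simp only [Pi.sub_apply] at hstep ⊢
    linarith
  exact le_of_mul_le_mul_left this (sub_pos.2 hα1)

end TugOfWar

theorem stmt_12_general (d : ℕ) (μ : Measure (EuclideanSpace ℝ (Fin d)))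
    (hpos : ∀ (x : EuclideanSpace ℝ (Fin d)) (ρ : ℝ), 0 < ρ → 0 < μ (ball x ρ))
    (hfin : ∀ (x : EuclideanSpace ℝ (Fin d)) (ρ : ℝ), μ (ball x ρ) < ⊤)
    (Ω : Set (EuclideanSpace ℝ (Fin d)))
    (hopen : IsOpen Ω) (hconn : IsConnected Ω) (hbd : Bornology.IsBounded Ω)
    (r : EuclideanSpace ℝ (Fin d) → ℝ)
    (hr : ∀ x ∈ Ω, 0 < r x ∧ r x ≤ infDist x Ωᶜ)
    (α : ℝ) (hα0 : 0 ≤ α) (hα1 : α < 1)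
    (u v : EuclideanSpace ℝ (Fin d) → ℝ)
    (hu : ContinuousOn u (closure Ω)) (hv : ContinuousOn v (closure Ω))
    (hTu : ∀ x ∈ Ω, u x =
      α * ((sSup (u '' ball x (r x)) + sInf (u '' ball x (r x))) / 2) +
        (1 - α) * ⨍ y in ball x (r x), u y ∂μ)
    (hTv : ∀ x ∈ Ω, v x =
      α * ((sSup (v '' ball x (r x)) + sInf (v '' ball x (r x))) / 2) +
        (1 - α) * ⨍ y in ball x (r x), v y ∂μ)
    (hbdry : ∀ x ∈ frontier Ω, u x ≤ v x) :
    ∀ x ∈ Ω, u x ≤ v x := by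
  have := Measure.isOpenPosMeasure_of_measure_ball_pos hpos
  have := isFiniteMeasureOnCompacts_of_measure_ball_lt_top hfin
  intro x hx
  have hΩ : Ω ≠ univ := by
    rintro rfl
    have := hr x hx
    simp only [compl_univ, infDist_empty] at this
    linarith
  have hplateau (a) (ha : a ∈ Ω) (hmax : IsMaxOn (u - v) (closure Ω) a) :
      ∀ᶠ y in 𝓝 a, (u - v) y = (u - v) a := by
    have hball : ball a (r a) ⊆ closure Ω :=
      ((ball_subset_ball (hr a ha).2).trans ball_infDist_compl_subset).trans subset_closure
    have hcenter : a ∈ ball a (r a) := mem_ball_self (hr a ha).1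
    filter_upwards [isOpen_ball.mem_nhds hcenter] with y hy
    exact sub_eqOn_of_isMaxOn_of_eq_tugOfWarAverage hα0 hα1 hbd.isCompact_closure isOpen_ball
      hball hu hv hcenter (hTu a ha) (hTv a ha) (hmax.on_subset hball) hy
  obtain ⟨p, hp, hxp⟩ := hopen.exists_mem_frontier_le_of_eventually_eq hconn.isPreconnected
    hbd.isCompact_closure hΩ (hu.sub hv) hplateau x hx
  linarith [hbdry p hp, Pi.sub_apply u v x, Pi.sub_apply u v p]

theorem stmt_12 (d : ℕ) (μ : Measure (EuclideanSpace ℝ (Fin d)))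
    (hpos : ∀ (x : EuclideanSpace ℝ (Fin d)) (ρ : ℝ), 0 < ρ → 0 < μ (ball x ρ))
    (hfin : ∀ (x : EuclideanSpace ℝ (Fin d)) (ρ : ℝ), μ (ball x ρ) < ⊤)
    (Ω : Set (EuclideanSpace ℝ (Fin d))) (hne : Ω.Nonempty)
    (hopen : IsOpen Ω) (hconn : IsConnected Ω) (hbd : Bornology.IsBounded Ω)
    (r : EuclideanSpace ℝ (Fin d) → ℝ)
    (hr : ∀ x ∈ Ω, 0 < r x ∧ r x ≤ infDist x Ωᶜ)
    (α : ℝ) (hα0 : 0 ≤ α) (hα1 : α < 1)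
    (u v : EuclideanSpace ℝ (Fin d) → ℝ)
    (hu : ContinuousOn u (closure Ω)) (hv : ContinuousOn v (closure Ω))
    (hTu : ∀ x ∈ Ω, u x =
      α * ((sSup (u '' ball x (r x)) + sInf (u '' ball x (r x))) / 2) +
        (1 - α) * ⨍ y in ball x (r x), u y ∂μ)
    (hTv : ∀ x ∈ Ω, v x =
      α * ((sSup (v '' ball x (r x)) + sInf (v '' ball x (r x))) / 2) +
        (1 - α) * ⨍ y in ball x (r x), v y ∂μ)
    (hbdry : ∀ x ∈ frontier Ω, u x ≤ v x) :
    ∀ x ∈ Ω, u x ≤ v x :=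
  stmt_12_general d μ hpos hfin Ω hopen hconn hbd r hr α hα0 hα1 u v hu hv hTu hTv hbdry
end

section
/- Uniqueness of the Dirichlet problem: under the hypotheses of the comparison principle (μ positive on balls, Ω bounded domain, r admissible radius function, 0 ≤ α < 1), if u, v ∈ C(Ω̄) both satisfy T_α w = w in Ω and u = v on ∂Ω, then u = v on Ω̄. -/
/-!
Let `w = u - v` attain its maximum `M` over the compact set `closure Ω` at `x₀`. If `M > 0`, then
`x₀ ∈ Ω`, and at any point `x ∈ Ω` where `w x = M` the two mean value equations give
`M ≤ α M + (1 - α) ⨍_{B(x, r x)} w`, hence `M ≤ ⨍_{B(x, r x)} w`; as `w ≤ M` and `μ` charges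
every ball, the continuous function `w` equals `M` on the whole ball. So the level set `{w = M}`
is open in the connected set `Ω`, hence `w ≡ M` on `closure Ω`, which contradicts `w = 0` on the
(nonempty) frontier. Exchanging `u` and `v` gives equality.
-/

open Metric MeasureTheory Set

noncomputable def midrange {X : Type*} (f : X → ℝ) (s : Set X) : ℝ :=
  (sSup (f '' s) + sInf (f '' s)) / 2

theorem midrange_sub_midrange_le {X : Type*} {s : Set X} {u v : X → ℝ} {M : ℝ} (hs : s.Nonempty)
    (hu : BddBelow (u '' s)) (hv : BddAbove (v '' s)) (h : ∀ y ∈ s, u y ≤ v y + M) :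
    midrange u s - midrange v s ≤ M := by
  have hsSup : sSup (u '' s) ≤ sSup (v '' s) + M :=
    csSup_le (hs.image u) <| forall_mem_image.2 fun y hy ↦
      (h y hy).trans (add_le_add_left (le_csSup hv (mem_image_of_mem v hy)) M)
  have hsInf : sInf (u '' s) - M ≤ sInf (v '' s) :=
    le_csInf (hs.image v) <| forall_mem_image.2 fun y hy ↦ by
      linarith [csInf_le hu (mem_image_of_mem u hy), h y hy]
  unfold midrange
  linarith

theorem setAverage_sub {X : Type*} [MeasurableSpace X] {μ : Measure X} {s : Set X} {f g : X → ℝ}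
    (hf : IntegrableOn f s μ) (hg : IntegrableOn g s μ) :
    ⨍ y in s, (f y - g y) ∂μ = ⨍ y in s, f y ∂μ - ⨍ y in s, g y ∂μ := by
  simp only [setAverage_eq, integral_sub hf hg, smul_sub]

theorem MeasureTheory.Measure.isOpenPosMeasure_of_measure_ball_pos {X : Type*}
    [PseudoMetricSpace X] [MeasurableSpace X] {μ : Measure X}
    (h : ∀ x (ρ : ℝ), 0 < ρ → 0 < μ (ball x ρ)) : μ.IsOpenPosMeasure where
  open_pos U hU := fun ⟨x, hx⟩ ↦ by
    obtain ⟨ε, hε, hball⟩ := Metric.isOpen_iff.mp hU x hx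
    exact ((h x ε hε).trans_le (measure_mono hball)).ne'

theorem MeasureTheory.Measure.isFiniteMeasureOnCompacts_of_measure_ball_lt_top {X : Type*}
    [PseudoMetricSpace X] [MeasurableSpace X] {μ : Measure X}
    (h : ∀ x (ρ : ℝ), μ (ball x ρ) < ⊤) : IsFiniteMeasureOnCompacts μ where
  lt_top_of_isCompact {K} hK := by
    rcases K.eq_empty_or_nonempty with rfl | ⟨x, -⟩
    · simp
    · obtain ⟨R, hR⟩ := hK.isBounded.subset_ball x
      exact (measure_mono hR).trans_lt (h x R)

theorem eqOn_of_le_of_le_setAverage_s13 {X : Type*} [TopologicalSpace X] [MeasurableSpace X]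
    [OpensMeasurableSpace X] {μ : Measure X} [μ.IsOpenPosMeasure] {U : Set X} {w : X → ℝ} {M : ℝ}
    (hU : IsOpen U) (hμU : μ U ≠ ⊤) (hwi : IntegrableOn w U μ) (hwc : ContinuousOn w U)
    (hle : ∀ y ∈ U, w y ≤ M) (havg : M ≤ ⨍ y in U, w y ∂μ) :
    EqOn w (fun _ ↦ M) U := by
  have := isFiniteMeasure_restrict.2 hμU
  have hnonneg : 0 ≤ᵐ[μ.restrict U] fun y ↦ M - w y :=
    (ae_restrict_iff' hU.measurableSet).2 <| ae_of_all _ fun y hy ↦ sub_nonneg.2 (hle y hy)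
  have hgi : Integrable (fun y ↦ M - w y) (μ.restrict U) :=
    (integrable_const M).sub hwi
  have hint : ∫ y in U, (M - w y) ∂μ = 0 := by
    refine le_antisymm ?_ (integral_nonneg_of_ae hnonneg)
    rw [integral_sub (integrable_const M) hwi, setIntegral_const, ← measure_smul_setAverage w hμU,
      smul_eq_mul, smul_eq_mul, ← mul_sub]
    exact mul_nonpos_of_nonneg_of_nonpos measureReal_nonneg (sub_nonpos.2 havg)
  have hae : w =ᵐ[μ.restrict U] fun _ ↦ M := by
    filter_upwards [(integral_eq_zero_iff_of_nonneg_ae hnonneg hgi).1 hint] with y hy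
    simpa [sub_eq_zero, eq_comm] using hy
  exact μ.eqOn_open_of_ae_eq hae hU hwc continuousOn_const

section MeanValue

variable {X : Type*} [MetricSpace X] [MeasurableSpace X]

/-- The operator `T_α` with radius function `r`. -/
noncomputable def meanValueOp (α : ℝ) (μ : Measure X) (r : X → ℝ) (u : X → ℝ) (x : X) : ℝ :=
  α * midrange u (ball x (r x)) + (1 - α) * ⨍ y in ball x (r x), u y ∂μ

variable {μ : Measure X} {α : ℝ} {r : X → ℝ} {u v : X → ℝ} {x : X}

theorem meanValueOp_sub_meanValueOp_le {M : ℝ} (hα0 : 0 ≤ α) (hx : 0 < r x)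
    (hui : IntegrableOn u (ball x (r x)) μ) (hvi : IntegrableOn v (ball x (r x)) μ)
    (hu : BddBelow (u '' ball x (r x))) (hv : BddAbove (v '' ball x (r x)))
    (h : ∀ y ∈ ball x (r x), u y ≤ v y + M) :
    meanValueOp α μ r u x - meanValueOp α μ r v x ≤
      α * M + (1 - α) * ⨍ y in ball x (r x), (u y - v y) ∂μ := by
  have hmid := midrange_sub_midrange_le ⟨x, mem_ball_self hx⟩ hu hv h
  rw [setAverage_sub hui hvi]
  unfold meanValueOp
  nlinarith [mul_le_mul_of_nonneg_left hmid hα0]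

variable [OpensMeasurableSpace X] [μ.IsOpenPosMeasure] [IsFiniteMeasureOnCompacts μ]

theorem eqOn_ball_of_isMaxOn_sub {K : Set X} (hK : IsCompact K) (hα0 : 0 ≤ α) (hα1 : α < 1)
    (hx : 0 < r x) (hBK : ball x (r x) ⊆ K) (hu : ContinuousOn u K) (hv : ContinuousOn v K)
    (hsub : u x ≤ meanValueOp α μ r u x) (hsuper : meanValueOp α μ r v x ≤ v x)
    (hmax : IsMaxOn (u - v) (ball x (r x)) x) :
    EqOn (u - v) (fun _ ↦ (u - v) x) (ball x (r x)) := by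
  have hui : IntegrableOn u (ball x (r x)) μ := (hu.integrableOn_compact hK).mono_set hBK
  have hvi : IntegrableOn v (ball x (r x)) μ := (hv.integrableOn_compact hK).mono_set hBK
  have hT := meanValueOp_sub_meanValueOp_le (M := (u - v) x) hα0 hx hui hvi
    ((hK.bddBelow_image hu).mono (image_mono hBK)) ((hK.bddAbove_image hv).mono (image_mono hBK))
    fun y hy ↦ sub_le_iff_le_add'.1 (hmax hy)
  have havg : (u - v) x ≤ ⨍ y in ball x (r x), (u - v) y ∂μ := by
    refine le_of_mul_le_mul_left ?_ (sub_pos.2 hα1)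
    simp only [Pi.sub_apply] at hT ⊢
    linarith
  exact eqOn_of_le_of_le_setAverage_s13 isOpen_ball
    ((measure_mono hBK).trans_lt hK.measure_lt_top).ne (hui.sub hvi) ((hu.sub hv).mono hBK)
    (fun y hy ↦ hmax hy) havg

end MeanValue

theorem IsPreconnected.eqOn_closure_of_isOpen_inter_preimage {X Y : Type*} [TopologicalSpace X]
    [TopologicalSpace Y] [T1Space Y] {s : Set X} (hs : IsPreconnected s) {f : X → Y} {c : Y}
    (hf : ContinuousOn f (closure s)) (hopen : IsOpen (s ∩ f ⁻¹' {c}))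
    (hne : (s ∩ f ⁻¹' {c}).Nonempty) : EqOn f (fun _ ↦ c) (closure s) := by
  have hclosure : closure (s ∩ f ⁻¹' {c}) ⊆ closure s ∩ f ⁻¹' {c} :=
    closure_minimal (inter_subset_inter_left _ subset_closure)
      (hf.preimage_isClosed_of_isClosed isClosed_closure isClosed_singleton)
  have hsub : s ⊆ s ∩ f ⁻¹' {c} := hs.subset_of_closure_inter_subset hopen
    (by rwa [inter_eq_right.2 inter_subset_left]) fun y ⟨hy, hys⟩ ↦ ⟨hys, (hclosure hy).2⟩
  exact fun y hy ↦ (hclosure (closure_mono hsub hy)).2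

section Comparison

variable {X : Type*} [MetricSpace X] [ProperSpace X] [PreconnectedSpace X] [MeasurableSpace X]
  [OpensMeasurableSpace X] {μ : Measure X} [μ.IsOpenPosMeasure] [IsFiniteMeasureOnCompacts μ]

theorem le_on_closure_of_le_on_frontier {Ω : Set X} (hΩ : IsPreconnected Ω)
    (hbd : Bornology.IsBounded Ω) {r : X → ℝ} (hr : ∀ x ∈ Ω, 0 < r x ∧ r x ≤ infDist x Ωᶜ)
    {α : ℝ} (hα0 : 0 ≤ α) (hα1 : α < 1) {u v : X → ℝ}
    (hu : ContinuousOn u (closure Ω)) (hv : ContinuousOn v (closure Ω))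
    (hsub : ∀ x ∈ Ω, u x ≤ meanValueOp α μ r u x) (hsuper : ∀ x ∈ Ω, meanValueOp α μ r v x ≤ v x)
    (hbdry : ∀ x ∈ frontier Ω, u x ≤ v x) :
    ∀ x ∈ closure Ω, u x ≤ v x := by
  intro x hx
  have hK : IsCompact (closure Ω) := hbd.isCompact_closure
  obtain ⟨x₀, hx₀, hmax⟩ := hK.exists_isMaxOn ⟨x, hx⟩ (hu.sub hv)
  suffices (u - v) x₀ ≤ 0 from sub_nonpos.1 ((hmax hx).trans this)
  by_contra! hM
  have hfrontier : ∀ z ∈ frontier Ω, (u - v) z ≠ (u - v) x₀ := fun z hz ↦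
    ((sub_nonpos.2 (hbdry z hz)).trans_lt hM).ne
  have hx₀Ω : x₀ ∈ Ω :=
    ((closure_eq_self_union_frontier Ω ▸ hx₀).resolve_right fun h ↦ hfrontier x₀ h rfl)
  have hball : ∀ y ∈ Ω, ball y (r y) ⊆ Ω := fun y hy ↦
    (ball_subset_ball (hr y hy).2).trans ball_infDist_compl_subset
  have hlevel : IsOpen (Ω ∩ (u - v) ⁻¹' {(u - v) x₀}) := by
    refine isOpen_iff_mem_nhds.2 fun y ⟨hy, hyM⟩ ↦ Filter.mem_of_superset
      (ball_mem_nhds y (hr y hy).1) fun z hz ↦ ⟨hball y hy hz, ?_⟩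
    have hmax_y : IsMaxOn (u - v) (ball y (r y)) y := fun z hz ↦
      (hmax ((hball y hy).trans subset_closure hz)).trans_eq hyM.symm
    exact (eqOn_ball_of_isMaxOn_sub hK hα0 hα1 (hr y hy).1
      ((hball y hy).trans subset_closure) hu hv (hsub y hy) (hsuper y hy) hmax_y hz).trans hyM
  have hconst := hΩ.eqOn_closure_of_isOpen_inter_preimage (hu.sub hv) hlevel ⟨x₀, hx₀Ω, rfl⟩
  have hΩ_ne_univ : Ω ≠ univ := fun h ↦ by
    have := (hr x₀ hx₀Ω).2
    rw [h, compl_univ, infDist_empty] at this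
    exact (hr x₀ hx₀Ω).1.not_ge this
  obtain ⟨z, hz⟩ := nonempty_frontier_iff.2 ⟨⟨x₀, hx₀Ω⟩, hΩ_ne_univ⟩
  exact hfrontier z hz (hconst (frontier_subset_closure hz))

end Comparison

theorem stmt_13_general (d : ℕ) (μ : Measure (EuclideanSpace ℝ (Fin d)))
    (hpos : ∀ (x : EuclideanSpace ℝ (Fin d)) (ρ : ℝ), 0 < ρ → 0 < μ (ball x ρ))
    (hfin : ∀ (x : EuclideanSpace ℝ (Fin d)) (ρ : ℝ), μ (ball x ρ) < ⊤)
    (Ω : Set (EuclideanSpace ℝ (Fin d)))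
    (hconn : IsConnected Ω) (hbd : Bornology.IsBounded Ω)
    (r : EuclideanSpace ℝ (Fin d) → ℝ)
    (hr : ∀ x ∈ Ω, 0 < r x ∧ r x ≤ infDist x Ωᶜ)
    (α : ℝ) (hα0 : 0 ≤ α) (hα1 : α < 1)
    (u v : EuclideanSpace ℝ (Fin d) → ℝ)
    (hu : ContinuousOn u (closure Ω)) (hv : ContinuousOn v (closure Ω))
    (hTu : ∀ x ∈ Ω, u x =
      α * ((sSup (u '' ball x (r x)) + sInf (u '' ball x (r x))) / 2) +
        (1 - α) * ⨍ y in ball x (r x), u y ∂μ)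
    (hTv : ∀ x ∈ Ω, v x =
      α * ((sSup (v '' ball x (r x)) + sInf (v '' ball x (r x))) / 2) +
        (1 - α) * ⨍ y in ball x (r x), v y ∂μ)
    (hbdry : ∀ x ∈ frontier Ω, u x = v x) :
    ∀ x ∈ closure Ω, u x = v x := by
  have := Measure.isOpenPosMeasure_of_measure_ball_pos hpos
  have := Measure.isFiniteMeasureOnCompacts_of_measure_ball_lt_top hfin
  have hcomp := fun {u v : EuclideanSpace ℝ (Fin d) → ℝ} ↦
    le_on_closure_of_le_on_frontier (μ := μ) hconn.isPreconnected hbd hr hα0 hα1 (u := u) (v := v)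
  intro x hx
  exact le_antisymm
    (hcomp hu hv (fun y hy ↦ (hTu y hy).le) (fun y hy ↦ (hTv y hy).ge)
      (fun y hy ↦ (hbdry y hy).le) x hx)
    (hcomp hv hu (fun y hy ↦ (hTv y hy).le) (fun y hy ↦ (hTu y hy).ge)
      (fun y hy ↦ (hbdry y hy).ge) x hx)

theorem stmt_13 (d : ℕ) (μ : Measure (EuclideanSpace ℝ (Fin d)))
    (hpos : ∀ (x : EuclideanSpace ℝ (Fin d)) (ρ : ℝ), 0 < ρ → 0 < μ (ball x ρ))
    (hfin : ∀ (x : EuclideanSpace ℝ (Fin d)) (ρ : ℝ), μ (ball x ρ) < ⊤)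
    (Ω : Set (EuclideanSpace ℝ (Fin d))) (hne : Ω.Nonempty)
    (hopen : IsOpen Ω) (hconn : IsConnected Ω) (hbd : Bornology.IsBounded Ω)
    (r : EuclideanSpace ℝ (Fin d) → ℝ)
    (hr : ∀ x ∈ Ω, 0 < r x ∧ r x ≤ infDist x Ωᶜ)
    (α : ℝ) (hα0 : 0 ≤ α) (hα1 : α < 1)
    (u v : EuclideanSpace ℝ (Fin d) → ℝ)
    (hu : ContinuousOn u (closure Ω)) (hv : ContinuousOn v (closure Ω))
    (hTu : ∀ x ∈ Ω, u x =
      α * ((sSup (u '' ball x (r x)) + sInf (u '' ball x (r x))) / 2) +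
        (1 - α) * ⨍ y in ball x (r x), u y ∂μ)
    (hTv : ∀ x ∈ Ω, v x =
      α * ((sSup (v '' ball x (r x)) + sInf (v '' ball x (r x))) / 2) +
        (1 - α) * ⨍ y in ball x (r x), v y ∂μ)
    (hbdry : ∀ x ∈ frontier Ω, u x = v x) :
    ∀ x ∈ closure Ω, u x = v x :=
  stmt_13_general d μ hpos hfin Ω hconn hbd r hr α hα0 hα1 u v hu hv hTu hTv hbdry
end

section
/- Let Ω ⊂ ℝ^d be a bounded strictly convex domain, u ∈ C(Ω̄), and suppose a sequence of functions u_k ∈ C(Ω̄) satisfies: the graph of each u_k lies in Γ_u, the convex hull of the graph of u, and u_k = u on ∂Ω. Then the family {u_k} is equicontinuous at every boundary point ξ ∈ ∂Ω: for every ε > 0 there is δ > 0 such that |u_k(x) − u(ξ)| < ε whenever x ∈ Ω̄, |x − ξ| < δ, for all k. -/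
/-!
Strict convexity makes every boundary point `ξ` an extreme point of `Ω̄`, so the only point of
the convex hull `Γ_u` of the graph of `u` lying above `ξ` is `(ξ, u ξ)`. By Carathéodory's
theorem `Γ_u` is compact, hence the part of `Γ_u` where `|t - u ξ| ≥ ε` projects to a compact set
missing `ξ`, which therefore stays at a positive distance `δ` from `ξ`. As the graphs of all the
`u_k` lie in `Γ_u`, this `δ` works uniformly in `k`.
-/

open Set Metric

section Caratheodory

variable {E : Type*} [AddCommGroup E] [Module ℝ E] [FiniteDimensional ℝ E]

theorem eq_sum_fin_finrank_succ_of_mem_convexHull {s : Set E} {x : E}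
    (hx : x ∈ convexHull ℝ s) :
    ∃ w ∈ stdSimplex ℝ (Fin (Module.finrank ℝ E + 1)),
      ∃ z : Fin (Module.finrank ℝ E + 1) → E, (∀ i, z i ∈ s) ∧ ∑ i, w i • z i = x := by
  obtain ⟨ι, _, z, w, hzs, hind, hw, hw1, hwz⟩ := eq_pos_convex_span_of_mem_convexHull hx
  obtain ⟨y, hy⟩ : s.Nonempty := (convexHull_nonempty_iff (𝕜 := ℝ)).1 ⟨x, hx⟩
  obtain ⟨e⟩ : Nonempty (ι ↪ Fin (Module.finrank ℝ E + 1)) :=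
    Function.Embedding.nonempty_of_card_le <| by
      simpa using hind.card_le_finrank_succ.trans
        (Nat.succ_le_succ (Submodule.finrank_le _))
  -- pad Carathéodory's family with zero weights at the point `y ∈ s`
  have hext0 : ∀ j ∉ range e, Function.extend e w 0 j = 0 := fun j hj ↦
    Function.extend_apply' _ _ _ hj
  refine ⟨Function.extend e w 0, ⟨fun j ↦ ?_, ?_⟩, Function.extend e z fun _ ↦ y, fun j ↦ ?_, ?_⟩
  · by_cases hj : j ∈ range e
    · obtain ⟨i, rfl⟩ := hj
      simpa [e.injective.extend_apply] using (hw i).le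
    · simp [hext0 j hj]
  · rw [← hw1]
    exact (Fintype.sum_of_injective e e.injective _ _ hext0
      fun i ↦ (e.injective.extend_apply _ _ _).symm).symm
  · by_cases hj : j ∈ range e
    · obtain ⟨i, rfl⟩ := hj
      simpa [e.injective.extend_apply] using hzs (mem_range_self i)
    · simpa [Function.extend_apply' _ _ _ hj] using hy
  · rw [← hwz]
    refine (Fintype.sum_of_injective e e.injective _ _ (fun j hj ↦ by simp [hext0 j hj])
      fun i ↦ ?_).symm
    simp [e.injective.extend_apply]

variable [TopologicalSpace E] [IsTopologicalAddGroup E] [ContinuousSMul ℝ E]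

theorem IsCompact.convexHull {s : Set E} (hs : IsCompact s) :
    IsCompact (_root_.convexHull ℝ s) := by
  set n := Module.finrank ℝ E + 1
  have himage : _root_.convexHull ℝ s =
      (fun wz : (Fin n → ℝ) × (Fin n → E) ↦ ∑ i, wz.1 i • wz.2 i) ''
        (stdSimplex ℝ (Fin n) ×ˢ univ.pi fun _ ↦ s) := by
    refine Subset.antisymm (fun x hx ↦ ?_) ?_
    · obtain ⟨w, hw, z, hzs, rfl⟩ := eq_sum_fin_finrank_succ_of_mem_convexHull hx
      exact ⟨(w, z), ⟨hw, fun i _ ↦ hzs i⟩, rfl⟩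
    · rintro _ ⟨⟨w, z⟩, ⟨hw, hz⟩, rfl⟩
      exact (convex_convexHull ℝ s).sum_mem (fun i _ ↦ hw.1 i) hw.2
        fun i _ ↦ subset_convexHull ℝ s (hz i (mem_univ i))
  rw [himage]
  exact ((isCompact_stdSimplex ℝ _).prod (isCompact_univ_pi fun _ ↦ hs)).image <|
    continuous_finsetSum _ fun i _ ↦
      ((continuous_apply i).comp continuous_fst).smul ((continuous_apply i).comp continuous_snd)

end Caratheodory

section StrictlyConvexDomain

variable {E : Type*} [NormedAddCommGroup E] [NormedSpace ℝ E] {Ω : Set E}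

theorem strictConvex_closure_of_openSegment_frontier_subset (hopen : IsOpen Ω)
    (hconv : Convex ℝ Ω)
    (hstrict : ∀ x ∈ frontier Ω, ∀ y ∈ frontier Ω, x ≠ y →
      ∀ t : ℝ, t ∈ Ioo (0 : ℝ) 1 → t • x + (1 - t) • y ∈ Ω) :
    StrictConvex ℝ (closure Ω) := by
  intro x hx y hy hxy a b ha hb hab
  refine interior_mono subset_closure ?_
  by_cases hxΩ : x ∈ Ω
  · exact hconv.combo_interior_closure_mem_interior (hopen.interior_eq.superset hxΩ) hy
      ha hb.le hab
  by_cases hyΩ : y ∈ Ω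
  · exact hconv.combo_closure_interior_mem_interior hx (hopen.interior_eq.superset hyΩ)
      ha.le hb hab
  have hfr : ∀ z ∈ closure Ω, z ∉ Ω → z ∈ frontier Ω := fun z hz hzΩ ↦
    ⟨hz, by rwa [hopen.interior_eq]⟩
  rw [hopen.interior_eq]
  simpa [← eq_sub_of_add_eq' hab] using
    hstrict x (hfr x hx hxΩ) y (hfr y hy hyΩ) hxy a ⟨ha, by linarith⟩

theorem frontier_subset_extremePoints_closure (hopen : IsOpen Ω) (hconv : Convex ℝ Ω)
    (hstrict : StrictConvex ℝ (closure Ω)) :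
    frontier Ω ⊆ (closure Ω).extremePoints ℝ := by
  intro ξ hξ
  have hne : (interior Ω).Nonempty := by
    rw [hopen.interior_eq]
    exact nonempty_iff_ne_empty.2 fun h ↦ by simp [h] at hξ
  refine hstrict.sdiff_interior_subset_extremePoints ⟨hξ.1, ?_⟩
  rw [hconv.interior_closure_eq_interior_of_nonempty_interior hne]
  exact hξ.2

end StrictlyConvexDomain

theorem snd_eq_of_mem_convexHull_graph {E F : Type*} [AddCommGroup E] [Module ℝ E]
    [AddCommGroup F] [Module ℝ F] {K : Set E} (hK : Convex ℝ K) {f : E → F} {ξ : E}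
    (hξ : ξ ∈ K.extremePoints ℝ) {q : E × F}
    (hq : q ∈ convexHull ℝ ((fun x ↦ (x, f x)) '' K)) (hqξ : q.1 = ξ) : q.2 = f ξ := by
  set C : Set (E × F) := Prod.fst ⁻¹' (K \ {ξ})
  have hC : Convex ℝ C :=
    (hK.mem_extremePoints_iff_convex_sdiff.1 hξ).2.linear_preimage (LinearMap.fst ℝ E F)
  have hgraph : (fun x ↦ (x, f x)) '' K ⊆ insert (ξ, f ξ) C := by
    rintro _ ⟨x, hx, rfl⟩
    by_cases hxξ : x = ξ
    · exact Or.inl (by rw [hxξ])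
    · exact Or.inr ⟨hx, hxξ⟩
  rcases C.eq_empty_or_nonempty with hCe | hCne
  · rw [hCe, insert_empty_eq] at hgraph
    obtain rfl : q = (ξ, f ξ) := by simpa using convexHull_mono hgraph hq
    rfl
  have hjoin : q ∈ convexJoin ℝ {(ξ, f ξ)} C := by
    rw [← hC.convexHull_eq, ← convexHull_insert hCne]
    exact convexHull_mono hgraph hq
  obtain ⟨_, rfl, c, hc, a, b, -, -, hab, rfl⟩ := mem_convexJoin.1 hjoin
  obtain rfl : b = 0 := by
    by_contra hb0
    refine hc.2 (smul_right_injective E hb0 ?_)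
    simp only [Prod.fst_add, Prod.smul_fst] at hqξ
    linear_combination (norm := module) hqξ - hab • ξ
  simp [(add_zero a).symm.trans hab]

theorem IsCompact.exists_pos_forall_abs_snd_sub_lt {X : Type*} [MetricSpace X]
    {Γ : Set (X × ℝ)} (hΓ : IsCompact Γ) {ξ : X} {c : ℝ} (hfiber : ∀ t, (ξ, t) ∈ Γ → t = c)
    {ε : ℝ} (hε : 0 < ε) : ∃ δ : ℝ, 0 < δ ∧ ∀ q ∈ Γ, dist q.1 ξ < δ → |q.2 - c| < ε := by
  set B := Γ ∩ {q | ε ≤ |q.2 - c|}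
  have hB : IsCompact (Prod.fst '' B) :=
    (hΓ.inter_right (isClosed_le continuous_const (continuous_snd.sub continuous_const).abs)).image
      continuous_fst
  have hξB : ξ ∉ Prod.fst '' B := by
    rintro ⟨⟨_, t⟩, ⟨htΓ, htε⟩, rfl⟩
    simp only [mem_ofPred_eq, hfiber t htΓ, sub_self, abs_zero] at htε
    linarith
  obtain ⟨δ, hδ, hball⟩ := Metric.isOpen_iff.1 hB.isClosed.isOpen_compl ξ hξB
  refine ⟨δ, hδ, fun q hq hqξ ↦ ?_⟩
  by_contra! hqε
  exact hball (mem_ball.2 hqξ) ⟨q, ⟨hq, hqε⟩, rfl⟩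

theorem stmt_19_general (d : ℕ) (Ω : Set (EuclideanSpace ℝ (Fin d)))
    (hopen : IsOpen Ω) (hconv : Convex ℝ Ω) (hbd : Bornology.IsBounded Ω)
    (hstrict : ∀ x ∈ frontier Ω, ∀ y ∈ frontier Ω, x ≠ y →
      ∀ t : ℝ, t ∈ Set.Ioo (0 : ℝ) 1 → t • x + (1 - t) • y ∈ Ω)
    (u : EuclideanSpace ℝ (Fin d) → ℝ) (hu : ContinuousOn u (closure Ω))
    (uk : ℕ → EuclideanSpace ℝ (Fin d) → ℝ)
    (hgraph : ∀ k, ∀ x ∈ closure Ω,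
      (x, uk k x) ∈ convexHull ℝ
        {p : EuclideanSpace ℝ (Fin d) × ℝ | ∃ z ∈ closure Ω, p = (z, u z)}) :
    ∀ ξ ∈ frontier Ω, ∀ ε : ℝ, 0 < ε → ∃ δ : ℝ, 0 < δ ∧
      ∀ k, ∀ x ∈ closure Ω, dist x ξ < δ → |uk k x - u ξ| < ε := by
  have hgraph_eq : {p : EuclideanSpace ℝ (Fin d) × ℝ | ∃ z ∈ closure Ω, p = (z, u z)} =
      (fun z ↦ (z, u z)) '' closure Ω := by
    ext
    simp only [mem_ofPred_eq, mem_image, eq_comm]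
  simp only [hgraph_eq] at hgraph
  intro ξ hξ ε hε
  have hΓ : IsCompact (convexHull ℝ ((fun z ↦ (z, u z)) '' closure Ω)) :=
    (hbd.isCompact_closure.image_of_continuousOn (continuousOn_id.prodMk hu)).convexHull
  have hξ_extreme : ξ ∈ (closure Ω).extremePoints ℝ :=
    frontier_subset_extremePoints_closure hopen hconv
      (strictConvex_closure_of_openSegment_frontier_subset hopen hconv hstrict) hξ
  obtain ⟨δ, hδ, hnear⟩ := hΓ.exists_pos_forall_abs_snd_sub_lt
    (fun t ht ↦ snd_eq_of_mem_convexHull_graph hconv.closure hξ_extreme ht rfl) hε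
  exact ⟨δ, hδ, fun k x hx hxξ ↦ hnear _ (hgraph k x hx) hxξ⟩

theorem stmt_19 (d : ℕ) (Ω : Set (EuclideanSpace ℝ (Fin d))) (hne : Ω.Nonempty)
    (hopen : IsOpen Ω) (hconv : Convex ℝ Ω) (hbd : Bornology.IsBounded Ω)
    (hstrict : ∀ x ∈ frontier Ω, ∀ y ∈ frontier Ω, x ≠ y →
      ∀ t : ℝ, t ∈ Set.Ioo (0 : ℝ) 1 → t • x + (1 - t) • y ∈ Ω)
    (u : EuclideanSpace ℝ (Fin d) → ℝ) (hu : ContinuousOn u (closure Ω))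
    (uk : ℕ → EuclideanSpace ℝ (Fin d) → ℝ)
    (huk : ∀ k, ContinuousOn (uk k) (closure Ω))
    (hgraph : ∀ k, ∀ x ∈ closure Ω,
      (x, uk k x) ∈ convexHull ℝ
        {p : EuclideanSpace ℝ (Fin d) × ℝ | ∃ z ∈ closure Ω, p = (z, u z)})
    (hbdry : ∀ k, ∀ x ∈ frontier Ω, uk k x = u x) :
    ∀ ξ ∈ frontier Ω, ∀ ε : ℝ, 0 < ε → ∃ δ : ℝ, 0 < δ ∧
      ∀ k, ∀ x ∈ closure Ω, dist x ξ < δ → |uk k x - u ξ| < ε :=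
  stmt_19_general d Ω hopen hconv hbd hstrict u hu uk hgraph
end
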